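/- Let f = (f¹,…,f^{2n+1}) : ℝ^{2n+1} → ℝ^{2n+1} be a smooth contact map and g : ℝ^{2n+1} → ℝ smooth. Then for every j = 1,…,n: T(g ∘ f) = Σ_{l=1}^{2n} ((W_l g) ∘ f)·T f^l + ((T g) ∘ f)·Σ_{l=1}^{n} ( W_j f^l · W_{n+j} f^{n+l} − W_{n+j} f^l · W_j f^{n+l} ). -/

import Mathlib

open scoped BigOperators

/-- The index of the coordinate `w_j` (`j : Fin (2n)`) inside `Fin (2n+1)`. -/
def embIdx (n : ℕ) (j : Fin (2*n)) : Fin (2*n+1) := ⟨j, by have := j.isLt; omega⟩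

/-- The index of `w_j` for `j : Fin n` (the "first layer" indices `1,…,n`). -/
def loIdx (n : ℕ) (j : Fin n) : Fin (2*n) := ⟨j, by have := j.isLt; omega⟩

/-- The index of `w_{n+j}` for `j : Fin n` (the indices `n+1,…,2n`). -/
def hiIdx (n : ℕ) (j : Fin n) : Fin (2*n) := ⟨n + j, by have := j.isLt; omega⟩

/-- Partial derivative `∂_{w_i} g` at `p` (the last index `i = 2n` is the `t`-coordinate). -/
noncomputable def pderiv' (n : ℕ) (i : Fin (2*n+1))
    (g : (Fin (2*n+1) → ℝ) → ℝ) (p : Fin (2*n+1) → ℝ) : ℝ :=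
  fderiv ℝ g p (Pi.single i 1)

/-- The function `w̃_j`: `w̃_j(p) = p_{n+j}` for `1 ≤ j ≤ n` and `w̃_j(p) = −p_{j−n}`
for `n+1 ≤ j ≤ 2n` (here `j : Fin (2n)` is 0-based). -/
def wt (n : ℕ) (j : Fin (2*n)) (p : Fin (2*n+1) → ℝ) : ℝ :=
  if h : (j : ℕ) < n then p ⟨n + (j : ℕ), by omega⟩
  else - p ⟨(j : ℕ) - n, by have := j.isLt; omega⟩

/-- The horizontal vector field `W_j g := ∂_{w_j} g − (1/2)·w̃_j·∂_t g`. -/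
noncomputable def Wop (n : ℕ) (j : Fin (2*n))
    (g : (Fin (2*n+1) → ℝ) → ℝ) : (Fin (2*n+1) → ℝ) → ℝ :=
  fun p => pderiv' n (embIdx n j) g p - (1/2) * wt n j p * pderiv' n (Fin.last (2*n)) g p

/-- The vertical vector field `T g := ∂_t g`. -/
noncomputable def Tvert (n : ℕ)
    (g : (Fin (2*n+1) → ℝ) → ℝ) : (Fin (2*n+1) → ℝ) → ℝ :=
  fun p => pderiv' n (Fin.last (2*n)) g p

/-- A map `f : ℝ^{2n+1} → ℝ^{2n+1}` is contact if for every `j = 1,…,2n`,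
`W_j f^{2n+1} + (1/2)·Σ_{l=1}^{2n} (w̃_l ∘ f)·W_j f^l = 0` identically. -/
def IsContact (n : ℕ) (f : (Fin (2*n+1) → ℝ) → (Fin (2*n+1) → ℝ)) : Prop :=
  ∀ (j : Fin (2*n)) (p : Fin (2*n+1) → ℝ),
    Wop n j (fun q => f q (Fin.last (2*n))) p
      + (1/2) * ∑ l : Fin (2*n), wt n l (f p) * Wop n j (fun q => f q (embIdx n l)) p = 0

section Helpers
variable {n : ℕ}

lemma contDiff_coord (k : Fin (2*n+1)) :
    ContDiff ℝ (⊤ : ℕ∞) (fun p : Fin (2*n+1) → ℝ => p k) :=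
  (ContinuousLinearMap.proj k : ((Fin (2*n+1)) → ℝ) →L[ℝ] ℝ).contDiff

lemma contDiff_wt (l : Fin (2*n)) : ContDiff ℝ (⊤ : ℕ∞) (wt n l) := by
  unfold wt
  split
  · exact contDiff_coord _
  · exact (contDiff_coord _).neg

lemma contDiff_pderiv' {h : (Fin (2*n+1) → ℝ) → ℝ} (hh : ContDiff ℝ (⊤ : ℕ∞) h) (i : Fin (2*n+1)) :
    ContDiff ℝ (⊤ : ℕ∞) (pderiv' n i h) :=
  (hh.fderiv_right (by simp)).clm_apply contDiff_const

lemma contDiff_Wop {h : (Fin (2*n+1) → ℝ) → ℝ} (hh : ContDiff ℝ (⊤ : ℕ∞) h) (j : Fin (2*n)) :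
    ContDiff ℝ (⊤ : ℕ∞) (Wop n j h) :=
  (contDiff_pderiv' hh _).sub
    ((contDiff_const.mul (contDiff_wt j)).mul (contDiff_pderiv' hh _))

lemma clm_apply_eq_sum {N : ℕ} (L : ((Fin N) → ℝ) →L[ℝ] ℝ) (v : Fin N → ℝ) :
    L v = ∑ k, v k * L (Pi.single k (1:ℝ)) := by
  have hv : v = ∑ k, v k • (Pi.single k (1:ℝ) : Fin N → ℝ) := by
    funext m
    simp [Finset.sum_apply, Pi.single_apply]
  conv_lhs => rw [hv]
  rw [map_sum]
  simp [smul_eq_mul]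

lemma pderiv'_coord (i k : Fin (2*n+1)) (p : Fin (2*n+1) → ℝ) :
    pderiv' n i (fun q => q k) p = (Pi.single i (1:ℝ) : Fin (2*n+1) → ℝ) k := by
  unfold pderiv'
  rw [show (fun q : Fin (2*n+1) → ℝ => q k)
      = (ContinuousLinearMap.proj k : ((Fin (2*n+1)) → ℝ) →L[ℝ] ℝ) from rfl,
    ContinuousLinearMap.fderiv]
  rfl

lemma pderiv'_comp {f : (Fin (2*n+1) → ℝ) → (Fin (2*n+1) → ℝ)} {g : (Fin (2*n+1) → ℝ) → ℝ}
    (hg : ContDiff ℝ (⊤ : ℕ∞) g) (hf : ContDiff ℝ (⊤ : ℕ∞) f) (i : Fin (2*n+1)) (p : Fin (2*n+1) → ℝ) :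
    pderiv' n i (fun q => g (f q)) p
      = ∑ k, pderiv' n k g (f p) * pderiv' n i (fun q => f q k) p := by
  have hfd : DifferentiableAt ℝ f p := hf.differentiable (by simp) |>.differentiableAt
  have hgd : DifferentiableAt ℝ g (f p) := hg.differentiable (by simp) |>.differentiableAt
  have hcomp : pderiv' n i (fun q => g (f q)) p
      = fderiv ℝ g (f p) (fderiv ℝ f p (Pi.single i 1)) := by
    unfold pderiv'
    rw [show (fun q => g (f q)) = g ∘ f from rfl, fderiv_comp p hgd hfd]
    rfl
  rw [hcomp, clm_apply_eq_sum (fderiv ℝ g (f p))]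
  refine Finset.sum_congr rfl fun k _ => ?_
  have : pderiv' n i (fun q => f q k) p = fderiv ℝ f p (Pi.single i 1) k := by
    unfold pderiv'
    rw [show (fun q => f q k)
        = (ContinuousLinearMap.proj k : ((Fin (2*n+1)) → ℝ) →L[ℝ] ℝ) ∘ f from rfl,
      fderiv_comp p (ContinuousLinearMap.proj k).differentiableAt hfd,
      ContinuousLinearMap.fderiv]
    rfl
  rw [this, mul_comm]
  simp only [pderiv']

end Helpers
section Helpers2
variable {n : ℕ}

lemma diffAt {h : (Fin (2*n+1) → ℝ) → ℝ} (hh : ContDiff ℝ (⊤ : ℕ∞) h) (p : Fin (2*n+1) → ℝ) :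
    DifferentiableAt ℝ h p := hh.differentiable (by simp) |>.differentiableAt

lemma pderiv'_add {a b : (Fin (2*n+1) → ℝ) → ℝ} (ha : ContDiff ℝ (⊤ : ℕ∞) a) (hb : ContDiff ℝ (⊤ : ℕ∞) b)
    (i : Fin (2*n+1)) (p : Fin (2*n+1) → ℝ) :
    pderiv' n i (fun q => a q + b q) p = pderiv' n i a p + pderiv' n i b p := by
  unfold pderiv'
  rw [fderiv_fun_add (diffAt ha p) (diffAt hb p)]
  rfl

lemma pderiv'_neg {a : (Fin (2*n+1) → ℝ) → ℝ}
    (i : Fin (2*n+1)) (p : Fin (2*n+1) → ℝ) :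
    pderiv' n i (fun q => -a q) p = - pderiv' n i a p := by
  unfold pderiv'
  rw [fderiv_fun_neg]
  rfl

lemma pderiv'_mul {a b : (Fin (2*n+1) → ℝ) → ℝ} (ha : ContDiff ℝ (⊤ : ℕ∞) a) (hb : ContDiff ℝ (⊤ : ℕ∞) b)
    (i : Fin (2*n+1)) (p : Fin (2*n+1) → ℝ) :
    pderiv' n i (fun q => a q * b q) p = pderiv' n i a p * b p + a p * pderiv' n i b p := by
  unfold pderiv'
  rw [fderiv_fun_mul (diffAt ha p) (diffAt hb p)]
  simp [smul_eq_mul]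
  ring

lemma pderiv'_const_mul {b : (Fin (2*n+1) → ℝ) → ℝ} (hb : ContDiff ℝ (⊤ : ℕ∞) b) (c : ℝ)
    (i : Fin (2*n+1)) (p : Fin (2*n+1) → ℝ) :
    pderiv' n i (fun q => c * b q) p = c * pderiv' n i b p := by
  unfold pderiv'
  rw [fderiv_const_mul (diffAt hb p) c]
  rfl

lemma pderiv'_sum {ι : Type*} [Fintype ι] {F : ι → (Fin (2*n+1) → ℝ) → ℝ}
    (hF : ∀ l, ContDiff ℝ (⊤ : ℕ∞) (F l)) (i : Fin (2*n+1)) (p : Fin (2*n+1) → ℝ) :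
    pderiv' n i (fun q => ∑ l, F l q) p = ∑ l, pderiv' n i (F l) p := by
  unfold pderiv'
  rw [fderiv_fun_sum (fun l _ => diffAt (hF l) p)]
  simp

lemma pderiv'_symm {h : (Fin (2*n+1) → ℝ) → ℝ} (hh : ContDiff ℝ (⊤ : ℕ∞) h)
    (i k : Fin (2*n+1)) (p : Fin (2*n+1) → ℝ) :
    pderiv' n i (pderiv' n k h) p = pderiv' n k (pderiv' n i h) p := by
  have hsymm : IsSymmSndFDerivAt ℝ h p :=
    (hh.contDiffAt).isSymmSndFDerivAt (by rw [minSmoothness_of_isRCLikeNormedField]; exact WithTop.coe_le_coe.mpr le_top)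
  have hd1 : DifferentiableAt ℝ (fderiv ℝ h) p :=
    ((hh.fderiv_right (m := 1) (WithTop.coe_le_coe.mpr le_top)).differentiable one_ne_zero).differentiableAt
  have key : ∀ v w : Fin (2*n+1) → ℝ,
      fderiv ℝ (fun q => fderiv ℝ h q w) p v = fderiv ℝ (fderiv ℝ h) p v w := by
    intro v w
    have : fderiv ℝ (fun q => fderiv ℝ h q w) p
        = (fderiv ℝ h p).comp (fderiv ℝ (fun _ : Fin (2*n+1) → ℝ => w) p)
          + (fderiv ℝ (fderiv ℝ h) p).flip w :=
      fderiv_clm_apply hd1 (differentiableAt_const w)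
    rw [this]
    simp
  unfold pderiv'
  rw [key, key, hsymm]

end Helpers2
section Helpers3
variable {n : ℕ}

lemma pderiv'_sub {a b : (Fin (2*n+1) → ℝ) → ℝ} (ha : ContDiff ℝ (⊤ : ℕ∞) a) (hb : ContDiff ℝ (⊤ : ℕ∞) b)
    (i : Fin (2*n+1)) (p : Fin (2*n+1) → ℝ) :
    pderiv' n i (fun q => a q - b q) p = pderiv' n i a p - pderiv' n i b p := by
  unfold pderiv'
  rw [fderiv_fun_sub (diffAt ha p) (diffAt hb p)]
  rfl

lemma Wop_add {a b : (Fin (2*n+1) → ℝ) → ℝ} (ha : ContDiff ℝ (⊤ : ℕ∞) a) (hb : ContDiff ℝ (⊤ : ℕ∞) b)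
    (d : Fin (2*n)) (p : Fin (2*n+1) → ℝ) :
    Wop n d (fun q => a q + b q) p = Wop n d a p + Wop n d b p := by
  unfold Wop
  rw [pderiv'_add ha hb, pderiv'_add ha hb]
  ring

lemma Wop_neg {a : (Fin (2*n+1) → ℝ) → ℝ} (d : Fin (2*n)) (p : Fin (2*n+1) → ℝ) :
    Wop n d (fun q => -a q) p = - Wop n d a p := by
  unfold Wop
  rw [pderiv'_neg, pderiv'_neg]
  ring

lemma Wop_mul {a b : (Fin (2*n+1) → ℝ) → ℝ} (ha : ContDiff ℝ (⊤ : ℕ∞) a) (hb : ContDiff ℝ (⊤ : ℕ∞) b)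
    (d : Fin (2*n)) (p : Fin (2*n+1) → ℝ) :
    Wop n d (fun q => a q * b q) p = Wop n d a p * b p + a p * Wop n d b p := by
  unfold Wop
  rw [pderiv'_mul ha hb, pderiv'_mul ha hb]
  ring

lemma Wop_const_mul {b : (Fin (2*n+1) → ℝ) → ℝ} (hb : ContDiff ℝ (⊤ : ℕ∞) b) (c : ℝ)
    (d : Fin (2*n)) (p : Fin (2*n+1) → ℝ) :
    Wop n d (fun q => c * b q) p = c * Wop n d b p := by
  unfold Wop
  rw [pderiv'_const_mul hb, pderiv'_const_mul hb]
  ring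

lemma Wop_sum {ι : Type*} [Fintype ι] {F : ι → (Fin (2*n+1) → ℝ) → ℝ}
    (hF : ∀ l, ContDiff ℝ (⊤ : ℕ∞) (F l)) (d : Fin (2*n)) (p : Fin (2*n+1) → ℝ) :
    Wop n d (fun q => ∑ l, F l q) p = ∑ l, Wop n d (F l) p := by
  unfold Wop
  rw [pderiv'_sum hF, pderiv'_sum hF, Finset.mul_sum, Finset.sum_sub_distrib]

lemma Wop_zero (d : Fin (2*n)) (p : Fin (2*n+1) → ℝ) :
    Wop n d (fun _ => (0:ℝ)) p = 0 := by
  simp [Wop, pderiv']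

lemma wt_loIdx (j : Fin n) :
    wt n (loIdx n j) = fun p => p (embIdx n (hiIdx n j)) := by
  funext q
  unfold wt
  rw [dif_pos (show ((loIdx n j : Fin (2*n)) : ℕ) < n from j.isLt)]
  apply congrArg
  exact Fin.ext (by simp [loIdx, hiIdx, embIdx])

lemma wt_hiIdx (j : Fin n) :
    wt n (hiIdx n j) = fun p => - p (embIdx n (loIdx n j)) := by
  funext q
  unfold wt
  rw [dif_neg (show ¬ ((hiIdx n j : Fin (2*n)) : ℕ) < n by simp [hiIdx])]
  congr 1
  apply congrArg
  exact Fin.ext (by simp [hiIdx, embIdx, loIdx])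

lemma pderiv'_wt_last (l : Fin (2*n)) (p : Fin (2*n+1) → ℝ) :
    pderiv' n (Fin.last (2*n)) (wt n l) p = 0 := by
  unfold wt
  split
  · rw [pderiv'_coord]
    rw [Pi.single_apply]
    rw [if_neg]
    simp only [Fin.ext_iff, Fin.last]
    omega
  · rw [pderiv'_neg, pderiv'_coord, Pi.single_apply, if_neg, neg_zero]
    simp only [Fin.ext_iff, Fin.last]
    have := l.isLt
    omega

lemma pderiv'_wt_lohi (j : Fin n) (p : Fin (2*n+1) → ℝ) :
    pderiv' n (embIdx n (hiIdx n j)) (wt n (loIdx n j)) p = 1 := by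
  rw [wt_loIdx, pderiv'_coord, Pi.single_apply, if_pos rfl]

lemma pderiv'_wt_hilo (j : Fin n) (p : Fin (2*n+1) → ℝ) :
    pderiv' n (embIdx n (loIdx n j)) (wt n (hiIdx n j)) p = -1 := by
  rw [wt_hiIdx, pderiv'_neg, pderiv'_coord, Pi.single_apply, if_pos rfl]

lemma pderiv'_Wop {h : (Fin (2*n+1) → ℝ) → ℝ} (hh : ContDiff ℝ (⊤ : ℕ∞) h)
    (a : Fin (2*n)) (i : Fin (2*n+1)) (p : Fin (2*n+1) → ℝ) :
    pderiv' n i (Wop n a h) p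
      = pderiv' n i (pderiv' n (embIdx n a) h) p
        - (1/2) * pderiv' n i (wt n a) p * pderiv' n (Fin.last (2*n)) h p
        - (1/2) * wt n a p * pderiv' n i (pderiv' n (Fin.last (2*n)) h) p := by
  have h1 : ContDiff ℝ (⊤ : ℕ∞) (fun q => (1/2 : ℝ) * wt n a q) :=
    contDiff_const.mul (contDiff_wt a)
  have h2 : ContDiff ℝ (⊤ : ℕ∞) (pderiv' n (Fin.last (2*n)) h) := contDiff_pderiv' hh _
  have : Wop n a h = fun q => pderiv' n (embIdx n a) h q
      - ((1/2 : ℝ) * wt n a q) * pderiv' n (Fin.last (2*n)) h q := rfl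
  rw [this, pderiv'_sub (contDiff_pderiv' hh _) (h1.mul h2),
    pderiv'_mul h1 h2, pderiv'_const_mul (contDiff_wt a)]
  ring

lemma Wop_comm {h : (Fin (2*n+1) → ℝ) → ℝ} (hh : ContDiff ℝ (⊤ : ℕ∞) h)
    (j : Fin n) (p : Fin (2*n+1) → ℝ) :
    Wop n (hiIdx n j) (Wop n (loIdx n j) h) p - Wop n (loIdx n j) (Wop n (hiIdx n j) h) p
      = - Tvert n h p := by
  have e1 : Wop n (hiIdx n j) (Wop n (loIdx n j) h) p
      = pderiv' n (embIdx n (hiIdx n j)) (Wop n (loIdx n j) h) p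
        - (1/2) * wt n (hiIdx n j) p
          * pderiv' n (Fin.last (2*n)) (Wop n (loIdx n j) h) p := rfl
  have e2 : Wop n (loIdx n j) (Wop n (hiIdx n j) h) p
      = pderiv' n (embIdx n (loIdx n j)) (Wop n (hiIdx n j) h) p
        - (1/2) * wt n (loIdx n j) p
          * pderiv' n (Fin.last (2*n)) (Wop n (hiIdx n j) h) p := rfl
  rw [e1, e2, pderiv'_Wop hh, pderiv'_Wop hh, pderiv'_Wop hh, pderiv'_Wop hh,
    pderiv'_wt_lohi, pderiv'_wt_hilo, pderiv'_wt_last, pderiv'_wt_last,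
    pderiv'_symm hh (embIdx n (loIdx n j)) (embIdx n (hiIdx n j)),
    pderiv'_symm hh (Fin.last (2*n)) (embIdx n (hiIdx n j)),
    pderiv'_symm hh (Fin.last (2*n)) (embIdx n (loIdx n j))]
  unfold Tvert
  ring

end Helpers3
section Helpers4
variable {n : ℕ}

lemma sum_split (F : Fin (2*n) → ℝ) :
    ∑ l, F l = ∑ m : Fin n, F (loIdx n m) + ∑ m : Fin n, F (hiIdx n m) := by
  rw [← Equiv.sum_comp (finSumFinEquiv.trans (finCongr (two_mul n).symm)) F,
    Fintype.sum_sum_type]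
  refine congrArg₂ (· + ·) (Finset.sum_congr rfl fun m _ => ?_)
    (Finset.sum_congr rfl fun m _ => ?_)
  · exact congrArg F (Fin.ext (by simp [loIdx]))
  · exact congrArg F (Fin.ext (by simp [hiIdx]; omega))

lemma lambda_eq {f : (Fin (2*n+1) → ℝ) → (Fin (2*n+1) → ℝ)}
    (hf : ContDiff ℝ (⊤ : ℕ∞) f) (hc : IsContact n f) (j : Fin n) (p : Fin (2*n+1) → ℝ) :
    Tvert n (fun q => f q (Fin.last (2*n))) p
      + (1/2) * ∑ l : Fin (2*n), wt n l (f p) * Tvert n (fun q => f q (embIdx n l)) p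
    = ∑ l : Fin n,
        (Wop n (loIdx n j) (fun q => f q (embIdx n (loIdx n l))) p
            * Wop n (hiIdx n j) (fun q => f q (embIdx n (hiIdx n l))) p
          - Wop n (hiIdx n j) (fun q => f q (embIdx n (loIdx n l))) p
            * Wop n (loIdx n j) (fun q => f q (embIdx n (hiIdx n l))) p) := by
  have hfk : ∀ k : Fin (2*n+1), ContDiff ℝ (⊤ : ℕ∞) (fun q => f q k) :=
    fun k => (contDiff_coord k).comp hf
  have hwtf : ∀ l : Fin (2*n), ContDiff ℝ (⊤ : ℕ∞) (fun q => wt n l (f q)) :=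
    fun l => (contDiff_wt l).comp hf
  -- the expanded differentiated contact equation
  have expand : ∀ d' d : Fin (2*n), (0:ℝ) =
      Wop n d' (Wop n d (fun q => f q (Fin.last (2*n)))) p
      + (1/2) * ∑ l : Fin (2*n),
          Wop n d' (fun q => wt n l (f q)) p * Wop n d (fun q => f q (embIdx n l)) p
      + (1/2) * ∑ l : Fin (2*n),
          wt n l (f p) * Wop n d' (Wop n d (fun q => f q (embIdx n l))) p := by
    intro d' d
    have hzero : (fun q => Wop n d (fun r => f r (Fin.last (2*n))) q
        + (1/2) * ∑ l : Fin (2*n), wt n l (f q) * Wop n d (fun r => f r (embIdx n l)) q)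
        = fun _ => (0:ℝ) := funext (hc d)
    have hA : ContDiff ℝ (⊤ : ℕ∞) (Wop n d (fun r => f r (Fin.last (2*n)))) :=
      contDiff_Wop (hfk _) d
    have hterm : ∀ l : Fin (2*n), ContDiff ℝ (⊤ : ℕ∞)
        (fun q => wt n l (f q) * Wop n d (fun r => f r (embIdx n l)) q) :=
      fun l => (hwtf l).mul (contDiff_Wop (hfk _) d)
    have hSum : ContDiff ℝ (⊤ : ℕ∞)
        (fun q => ∑ l : Fin (2*n), wt n l (f q) * Wop n d (fun r => f r (embIdx n l)) q) :=
      ContDiff.sum fun l _ => hterm l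
    have hB : ContDiff ℝ (⊤ : ℕ∞)
        (fun q => (1/2 : ℝ) * ∑ l : Fin (2*n), wt n l (f q)
          * Wop n d (fun r => f r (embIdx n l)) q) :=
      contDiff_const.mul hSum
    have h0 : Wop n d' (fun q => Wop n d (fun r => f r (Fin.last (2*n))) q
        + (1/2) * ∑ l : Fin (2*n), wt n l (f q) * Wop n d (fun r => f r (embIdx n l)) q) p
        = 0 := by rw [hzero]; exact Wop_zero d' p
    rw [Wop_add hA hB, Wop_const_mul hSum, Wop_sum hterm] at h0
    have hsummand : ∀ l : Fin (2*n),
        Wop n d' (fun q => wt n l (f q) * Wop n d (fun r => f r (embIdx n l)) q) p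
        = Wop n d' (fun q => wt n l (f q)) p * Wop n d (fun q => f q (embIdx n l)) p
          + wt n l (f p) * Wop n d' (Wop n d (fun q => f q (embIdx n l))) p :=
      fun l => Wop_mul (hwtf l) (contDiff_Wop (hfk _) d) d' p
    rw [Finset.sum_congr rfl (fun l _ => hsummand l), Finset.sum_add_distrib,
      mul_add] at h0
    linarith [h0]
  have cba := expand (hiIdx n j) (loIdx n j)
  have cab := expand (loIdx n j) (hiIdx n j)
  -- commutator rewrites
  have comm_t := Wop_comm (hfk (Fin.last (2*n))) j p
  have hcomm : ∀ l : Fin (2*n),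
      wt n l (f p) * Wop n (hiIdx n j) (Wop n (loIdx n j) (fun q => f q (embIdx n l))) p
      = wt n l (f p) * Wop n (loIdx n j) (Wop n (hiIdx n j) (fun q => f q (embIdx n l))) p
        - wt n l (f p) * Tvert n (fun q => f q (embIdx n l)) p := by
    intro l
    have := Wop_comm (hfk (embIdx n l)) j p
    linear_combination wt n l (f p) * this
  rw [Finset.sum_congr rfl (fun l _ => hcomm l), Finset.sum_sub_distrib, mul_sub] at cba
  -- now handle the first-order sum difference
  have hwlo : ∀ m : Fin n, (fun q => wt n (loIdx n m) (f q))
      = fun q => f q (embIdx n (hiIdx n m)) := by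
    intro m; funext q; rw [wt_loIdx]
  have hwhi : ∀ m : Fin n, (fun q => wt n (hiIdx n m) (f q))
      = fun q => -(f q (embIdx n (loIdx n m))) := by
    intro m; funext q; rw [wt_hiIdx]
  have Sdiff : (∑ l : Fin (2*n),
        Wop n (hiIdx n j) (fun q => wt n l (f q)) p
          * Wop n (loIdx n j) (fun q => f q (embIdx n l)) p)
      - (∑ l : Fin (2*n),
        Wop n (loIdx n j) (fun q => wt n l (f q)) p
          * Wop n (hiIdx n j) (fun q => f q (embIdx n l)) p)
      = 2 * ∑ l : Fin n,
        (Wop n (loIdx n j) (fun q => f q (embIdx n (loIdx n l))) p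
            * Wop n (hiIdx n j) (fun q => f q (embIdx n (hiIdx n l))) p
          - Wop n (hiIdx n j) (fun q => f q (embIdx n (loIdx n l))) p
            * Wop n (loIdx n j) (fun q => f q (embIdx n (hiIdx n l))) p) := by
    rw [← Finset.sum_sub_distrib,
      sum_split (fun l => Wop n (hiIdx n j) (fun q => wt n l (f q)) p
          * Wop n (loIdx n j) (fun q => f q (embIdx n l)) p
        - Wop n (loIdx n j) (fun q => wt n l (f q)) p
          * Wop n (hiIdx n j) (fun q => f q (embIdx n l)) p),
      Finset.mul_sum, ← Finset.sum_add_distrib]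
    refine Finset.sum_congr rfl fun m _ => ?_
    rw [hwlo m, hwhi m, Wop_neg, Wop_neg]
    ring
  linarith [cba, cab, Sdiff]

end Helpers4

/-- Chain rule for `T` along a smooth contact map: for every `j = 1,…,n`,
`T(g ∘ f) = Σ_{l=1}^{2n} ((W_l g) ∘ f)·T f^l
  + ((T g) ∘ f)·Σ_{l=1}^{n} ( W_j f^l · W_{n+j} f^{n+l} − W_{n+j} f^l · W_j f^{n+l} )`. -/
theorem T_comp_contact (n : ℕ)
    (f : (Fin (2*n+1) → ℝ) → (Fin (2*n+1) → ℝ)) (g : (Fin (2*n+1) → ℝ) → ℝ)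
    (hf : ContDiff ℝ (⊤ : ℕ∞) f) (hcontact : IsContact n f) (hg : ContDiff ℝ (⊤ : ℕ∞) g)
    (j : Fin n) (p : Fin (2*n+1) → ℝ) :
    Tvert n (g ∘ f) p =
      (∑ l : Fin (2*n), Wop n l g (f p) * Tvert n (fun q => f q (embIdx n l)) p)
        + Tvert n g (f p) *
            ∑ l : Fin n,
              (Wop n (loIdx n j) (fun q => f q (embIdx n (loIdx n l))) p
                  * Wop n (hiIdx n j) (fun q => f q (embIdx n (hiIdx n l))) p
                - Wop n (hiIdx n j) (fun q => f q (embIdx n (loIdx n l))) p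
                  * Wop n (loIdx n j) (fun q => f q (embIdx n (hiIdx n l))) p) := by
  have key := lambda_eq hf hcontact j p
  have h1 : Tvert n (g ∘ f) p
      = ∑ k : Fin (2*n+1), pderiv' n k g (f p) * Tvert n (fun q => f q k) p :=
    pderiv'_comp hg hf (Fin.last (2*n)) p
  rw [h1, Fin.sum_univ_castSucc]
  have hsummand : ∀ l : Fin (2*n),
      pderiv' n (Fin.castSucc l) g (f p) * Tvert n (fun q => f q (Fin.castSucc l)) p
      = Wop n l g (f p) * Tvert n (fun q => f q (embIdx n l)) p
        + (Tvert n g (f p) * (1/2))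
            * (wt n l (f p) * Tvert n (fun q => f q (embIdx n l)) p) := by
    intro l
    have hcast : (Fin.castSucc l) = embIdx n l := rfl
    rw [hcast]
    have hW : pderiv' n (embIdx n l) g (f p)
        = Wop n l g (f p) + (1/2) * wt n l (f p) * Tvert n g (f p) := by
      simp only [Wop, Tvert]
      ring
    rw [hW]
    ring
  rw [Finset.sum_congr rfl (fun l _ => hsummand l), Finset.sum_add_distrib,
    ← Finset.mul_sum]
  have hlast : pderiv' n (Fin.last (2*n)) g (f p) = Tvert n g (f p) := rfl
  rw [hlast]
  linear_combination Tvert n g (f p) * key
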